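/- arXiv:2303.10646 — 8 statements merged into one kernel-verified Lean document; each statement's English description precedes it below -/
import Mathlib

section
/- Let G be a finite connected simple graph, let K be a clique of G such that deleting K disconnects G, let G1 be the vertex set of one connected component of G − K, let G_ext = G1 ∪ K and G_int = V(G) ∖ G_ext. If x1 and x2 are vertices of G_int with |d(x1,K) − d(x2,K)| ≥ 2, then every vertex s ∈ G_ext resolves the pair (x1,x2), i.e. d(s,x1) ≠ d(s,x2). -/
/-- `d(x,K)`: the minimum distance from `x` to the set `K`. -/
noncomputable def distToSet {V : Type*} (G : SimpleGraph V) (x : V) (K : Set V) : ℕ :=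
  sInf (G.dist x '' K)

theorem stmt0 {V : Type*} [Fintype V] (G : SimpleGraph V) (hG : G.Connected)
    (K : Set V) (hK : G.IsClique K)
    (hdisc : ¬ (G.induce Kᶜ).Connected)
    (c : (G.induce Kᶜ).ConnectedComponent)
    (G1 : Set V) (hG1 : G1 = Subtype.val '' c.supp)
    (Gext Gint : Set V) (hext : Gext = G1 ∪ K) (hint : Gint = Gextᶜ)
    (x1 x2 : V) (hx1 : x1 ∈ Gint) (hx2 : x2 ∈ Gint)
    (hfar : distToSet G x1 K + 2 ≤ distToSet G x2 K ∨
            distToSet G x2 K + 2 ≤ distToSet G x1 K) :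
    ∀ s ∈ Gext, G.dist s x1 ≠ G.dist s x2 := by
  intro s hs
  classical
  -- K is nonempty
  have hKne : K.Nonempty := by
    rcases Set.eq_empty_or_nonempty K with h | h
    · subst h; simp [distToSet] at hfar
    · exact h
  -- distToSet is a lower bound
  have hle : ∀ (x k : V), k ∈ K → distToSet G x K ≤ G.dist x k := fun x k hk =>
    Nat.sInf_le ⟨k, hk, rfl⟩
  -- distToSet is attained
  have hattain : ∀ x : V, ∃ k ∈ K, G.dist x k = distToSet G x K := by
    intro x
    have hne : (G.dist x '' K).Nonempty := hKne.image _
    obtain ⟨k, hk, hkeq⟩ := Nat.sInf_mem hne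
    exact ⟨k, hk, hkeq⟩
  -- any walk from s to a vertex of Gint meets K
  have hcross : ∀ x, x ∈ Gint → ∀ p : G.Walk s x, ∃ k ∈ p.support, k ∈ K := by
    intro x hx p
    rcases hext ▸ hs with hsG1 | hsK
    swap
    · exact ⟨s, p.start_mem_support, hsK⟩
    by_contra hno
    push_neg at hno
    have hsub : {v | v ∈ p.support} ⊆ Kᶜ := fun v hv => hno v hv
    have hreach : (G.induce {v | v ∈ p.support}).Reachable
        ⟨s, p.start_mem_support⟩ ⟨x, p.end_mem_support⟩ :=
      (SimpleGraph.Walk.connected_induce_support p).preconnected _ _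
    have hreach2 : (G.induce Kᶜ).Reachable
        ⟨s, hsub p.start_mem_support⟩ ⟨x, hsub p.end_mem_support⟩ :=
      hreach.map (SimpleGraph.induceHomOfLE G hsub).toHom
    -- s ∈ G1 means ⟨s,_⟩ ∈ c.supp
    rw [hG1] at hsG1
    obtain ⟨s', hs'c, hs'val⟩ := hsG1
    have hseq : s' = ⟨s, hsub p.start_mem_support⟩ := Subtype.ext hs'val
    rw [SimpleGraph.ConnectedComponent.mem_supp_iff] at hs'c
    have hxc : (⟨x, hsub p.end_mem_support⟩ : ↥Kᶜ) ∈ c.supp := by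
      rw [SimpleGraph.ConnectedComponent.mem_supp_iff]
      rw [← hs'c, hseq]
      exact SimpleGraph.ConnectedComponent.eq.mpr hreach2.symm
    have : x ∈ Gext := by
      rw [hext]
      rw [hG1]
      exact Or.inl ⟨⟨x, hsub p.end_mem_support⟩, hxc, rfl⟩
    rw [hint] at hx
    exact hx this
  -- lower bound: d(s,K) + d(x,K) ≤ d(s,x) for x ∈ Gint
  have hlow : ∀ x, x ∈ Gint → distToSet G s K + distToSet G x K ≤ G.dist s x := by
    intro x hx
    obtain ⟨p, hp⟩ := hG.exists_walk_length_eq_dist s x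
    obtain ⟨k, hkp, hkK⟩ := hcross x hx p
    have hsplit := p.take_spec hkp
    have hlen : (p.takeUntil k hkp).length + (p.dropUntil k hkp).length = p.length := by
      rw [← SimpleGraph.Walk.length_append, hsplit]
    have h1 : G.dist s k ≤ (p.takeUntil k hkp).length := SimpleGraph.dist_le _
    have h2 : G.dist k x ≤ (p.dropUntil k hkp).length := SimpleGraph.dist_le _
    have h3 : distToSet G s K ≤ G.dist s k := hle s k hkK
    have h4 : distToSet G x K ≤ G.dist k x := by
      rw [SimpleGraph.dist_comm]; exact hle x k hkK
    omega
  -- upper bound: d(s,x) ≤ d(s,K) + d(x,K) + 1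
  have hup : ∀ x : V, G.dist s x ≤ distToSet G s K + distToSet G x K + 1 := by
    intro x
    obtain ⟨k1, hk1, he1⟩ := hattain s
    obtain ⟨k2, hk2, he2⟩ := hattain x
    by_cases hkk : k1 = k2
    · subst hkk
      have := hG.dist_triangle (u := s) (v := k1) (w := x)
      rw [SimpleGraph.dist_comm (u := k1) (v := x)] at this
      omega
    · have hadj : G.Adj k1 k2 := hK hk1 hk2 hkk
      have hd12 : G.dist k1 k2 = 1 := SimpleGraph.dist_eq_one_iff_adj.mpr hadj
      have t1 := hG.dist_triangle (u := s) (v := k1) (w := x)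
      have t2 := hG.dist_triangle (u := k1) (v := k2) (w := x)
      rw [SimpleGraph.dist_comm (u := k2) (v := x)] at t2
      omega
  have l1 := hlow x1 hx1
  have l2 := hlow x2 hx2
  have u1 := hup x1
  have u2 := hup x2
  omega
end

section
/- Let G be a finite connected simple graph, let K be a nonempty clique of G, and let x1, x2, s be vertices such that K separates x2 and s, and d(x1,K) + 2 ≤ d(x2,K). Then d(s,x1) < d(s,x2). -/
/-- `K` separates `u` and `v`: both are outside `K` and every walk from `u` to `v`
meets `K` (i.e. `u` and `v` lie in different components of `G − K`). -/
def Separates {V : Type*} (G : SimpleGraph V) (K : Set V) (u v : V) : Prop :=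
  u ∉ K ∧ v ∉ K ∧ ∀ p : G.Walk u v, ∃ w ∈ p.support, w ∈ K

theorem stmt1 {V : Type*} [Fintype V] (G : SimpleGraph V) (hG : G.Connected)
    (K : Set V) (hKne : K.Nonempty) (hK : G.IsClique K)
    (x1 x2 s : V) (hsep : Separates G K x2 s)
    (hfar : distToSet G x1 K + 2 ≤ distToSet G x2 K) :
    G.dist s x1 < G.dist s x2 := by
  classical
  -- k1 : nearest point of K to x1
  have hne : (G.dist x1 '' K).Nonempty := hKne.image _
  obtain ⟨k1, hk1K, hk1d⟩ := Nat.sInf_mem hne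
  -- shortest walk from s to x2
  obtain ⟨p, hp⟩ := (hG s x2).exists_walk_length_eq_dist
  obtain ⟨k, hkmem, hkK⟩ := hsep.2.2 p.reverse
  rw [SimpleGraph.Walk.support_reverse, List.mem_reverse] at hkmem
  -- split p at k
  have hsplit : (p.takeUntil k hkmem).length + (p.dropUntil k hkmem).length = p.length := by
    rw [← SimpleGraph.Walk.length_append, SimpleGraph.Walk.take_spec]
  have h1 : G.dist s k ≤ (p.takeUntil k hkmem).length := SimpleGraph.dist_le _
  have h2 : G.dist k x2 ≤ (p.dropUntil k hkmem).length := SimpleGraph.dist_le _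
  have hx2K : distToSet G x2 K ≤ G.dist k x2 := by
    rw [SimpleGraph.dist_comm]
    exact Nat.sInf_le ⟨k, hkK, rfl⟩
  have hkk1 : G.dist k k1 ≤ 1 := by
    by_cases h : k = k1
    · simp [h, SimpleGraph.dist_self]
    · simpa using SimpleGraph.dist_le (hK hkK hk1K h).toWalk
  have htri1 : G.dist s x1 ≤ G.dist s k + G.dist k x1 := hG.dist_triangle
  have htri2 : G.dist k x1 ≤ G.dist k k1 + G.dist k1 x1 := hG.dist_triangle
  have hk1x1 : G.dist k1 x1 = distToSet G x1 K := by rw [SimpleGraph.dist_comm]; exact hk1d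
  omega
end

section
/- Let G be a finite connected simple graph, let K be a nonempty clique of G such that deleting K disconnects G, let G1 be the vertex set of one connected component of G − K, and let x and y be vertices of V(G) ∖ G1. If min_{v ∈ K} (d(x,v) + d(s,v)) ≠ min_{v ∈ K} (d(y,v) + d(s,v)) for a vertex s ∈ G1, then s resolves the pair (x,y), i.e. d(s,x) ≠ d(s,y). -/
lemma lift_walk {V : Type*} (G : SimpleGraph V) (S : Set V) :
    ∀ {a b : V} (W : G.Walk a b) (h : ∀ u ∈ W.support, u ∈ S),
    (G.induce S).Reachable ⟨a, h a W.start_mem_support⟩ ⟨b, h b W.end_mem_support⟩ := by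
  intro a b W
  induction W with
  | nil => intro h; rfl
  | @cons a a' b hadj p ih =>
    intro h
    have h' : ∀ u ∈ p.support, u ∈ S := fun u hu =>
      h u (by simp [SimpleGraph.Walk.support_cons, hu])
    have ha : a ∈ S := h a (by simp)
    exact (SimpleGraph.Adj.reachable (by exact hadj :
      (G.induce S).Adj ⟨a, ha⟩ ⟨a', h' a' p.start_mem_support⟩)).trans (ih h')

theorem stmt5 {V : Type*} [Fintype V] (G : SimpleGraph V) (hG : G.Connected)
    (K : Set V) (hKne : K.Nonempty) (hK : G.IsClique K)
    (hdisc : ¬ (G.induce Kᶜ).Connected)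
    (c : (G.induce Kᶜ).ConnectedComponent)
    (G1 : Set V) (hG1 : G1 = Subtype.val '' c.supp)
    (x y : V) (hx : x ∉ G1) (hy : y ∉ G1)
    (s : V) (hs : s ∈ G1)
    (hres : sInf ((fun v => G.dist x v + G.dist s v) '' K) ≠
            sInf ((fun v => G.dist y v + G.dist s v) '' K)) :
    G.dist s x ≠ G.dist s y := by
  classical
  subst hG1
  obtain ⟨⟨s, hsK⟩, hsc, rfl⟩ := hs
  have key : ∀ t : V, t ∉ (Subtype.val '' c.supp : Set V) →
      G.dist s t = sInf ((fun v => G.dist t v + G.dist s v) '' K) := by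
    intro t ht
    apply Nat.le_antisymm
    · obtain ⟨v, hvK, hv⟩ := Nat.sInf_mem (hKne.image _)
      calc G.dist s t ≤ G.dist s v + G.dist v t := hG.dist_triangle
        _ = G.dist t v + G.dist s v := by rw [show G.dist v t = G.dist t v from SimpleGraph.dist_comm]; ring
        _ = _ := hv
    · obtain ⟨W, hW⟩ := (hG s t).exists_walk_length_eq_dist
      have : ∃ u ∈ W.support, u ∈ K := by
        by_cases htK : t ∈ K
        · exact ⟨t, W.end_mem_support, htK⟩
        · by_contra hcon
          push_neg at hcon
          have hall : ∀ u ∈ W.support, u ∈ Kᶜ := fun u hu => hcon u hu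
          have hr := lift_walk G Kᶜ W hall
          apply ht
          refine ⟨⟨t, hall t W.end_mem_support⟩, ?_, rfl⟩
          have : (G.induce Kᶜ).connectedComponentMk ⟨t, _⟩ =
              (G.induce Kᶜ).connectedComponentMk ⟨s, hsK⟩ :=
            SimpleGraph.ConnectedComponent.sound hr.symm
          simpa [SimpleGraph.ConnectedComponent.mem_supp_iff, this] using hsc
      obtain ⟨u, huW, huK⟩ := this
      have h1 : G.dist s u ≤ (W.takeUntil u huW).length := SimpleGraph.dist_le _
      have h2 : G.dist u t ≤ (W.dropUntil u huW).length := SimpleGraph.dist_le _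
      have hlen : (W.takeUntil u huW).length + (W.dropUntil u huW).length = W.length := by
        rw [← SimpleGraph.Walk.length_append, W.take_spec huW]
      calc sInf ((fun v => G.dist t v + G.dist s v) '' K)
          ≤ G.dist t u + G.dist s u := Nat.sInf_le ⟨u, huK, rfl⟩
        _ = G.dist s u + G.dist u t := by rw [show G.dist t u = G.dist u t from SimpleGraph.dist_comm]; ring
        _ ≤ _ := by omega
  rw [key x hx, key y hy]
  exact hres
end

section
/- Let G be a finite connected simple graph, let K be a nonempty clique of G, and let v be a vertex not in K such that K ∪ {v} is a clique. Let x and y be vertices such that K separates v and x, and K separates v and y. Then for every function r : K ∪ {v} → {0,1}, r resolves the pair (x,y) with respect to K ∪ {v} if and only if the restriction of r to K resolves the pair (x,y) with respect to K. -/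
/-- `r` resolves the pair `(x, y)` with respect to the set `K`:
`min_{u ∈ K} (d(x,u) + r(u)) ≠ min_{u ∈ K} (d(y,u) + r(u))`. -/
def ResolvesWrt {V : Type*} (G : SimpleGraph V) (K : Set V) (r : V → ℕ) (x y : V) : Prop :=
  sInf ((fun u => G.dist x u + r u) '' K) ≠ sInf ((fun u => G.dist y u + r u) '' K)

lemma insert_sInf_eq {V : Type*} (G : SimpleGraph V) (hG : G.Connected)
    (K : Set V) (hKne : K.Nonempty)
    (v : V) (hv : v ∉ K) (z : V) (hs : Separates G K v z)
    (r : V → ℕ) (hr : ∀ u ∈ K, r u ≤ 1) :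
    sInf ((fun u => G.dist z u + r u) '' (insert v K)) =
      sInf ((fun u => G.dist z u + r u) '' K) := by
  classical
  obtain ⟨hvK, hzK, hsep⟩ := hs
  -- shortest walk from z to v
  obtain ⟨p, hp⟩ := hG.exists_walk_length_eq_dist z v
  obtain ⟨w, hwsup, hwK⟩ := hsep p.reverse
  rw [SimpleGraph.Walk.support_reverse, List.mem_reverse] at hwsup
  have hdzw : G.dist z w + G.dist w v ≤ G.dist z v := by
    calc G.dist z w + G.dist w v
        ≤ (p.takeUntil w hwsup).length + (p.dropUntil w hwsup).length :=
          Nat.add_le_add (SimpleGraph.dist_le _) (SimpleGraph.dist_le _)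
      _ = p.length := by
          rw [← SimpleGraph.Walk.length_append, SimpleGraph.Walk.take_spec]
      _ = G.dist z v := hp.symm ▸ rfl
  have hwv : w ≠ v := fun h => hvK (h ▸ hwK)
  have h1 : 1 ≤ G.dist w v := (hG.pos_dist_of_ne hwv)
  have hkey : sInf ((fun u => G.dist z u + r u) '' K) ≤ G.dist z v + r v := by
    have : sInf ((fun u => G.dist z u + r u) '' K) ≤ G.dist z w + r w :=
      csInf_le (OrderBot.bddBelow _) ⟨w, hwK, rfl⟩
    have : G.dist z w + r w ≤ G.dist z v := by
      have := hr w hwK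
      omega
    omega
  rw [Set.image_insert_eq, csInf_insert (OrderBot.bddBelow _) (hKne.image _)]
  exact min_eq_right hkey

theorem stmt6 {V : Type*} [Fintype V] (G : SimpleGraph V) (hG : G.Connected)
    (K : Set V) (hKne : K.Nonempty) (hK : G.IsClique K)
    (v : V) (hv : v ∉ K) (hKv : G.IsClique (insert v K))
    (x y : V) (hsx : Separates G K v x) (hsy : Separates G K v y)
    (r : V → ℕ) (hr : ∀ u ∈ insert v K, r u = 0 ∨ r u = 1) :
    ResolvesWrt G (insert v K) r x y ↔ ResolvesWrt G K r x y := by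
  have hr' : ∀ u ∈ K, r u ≤ 1 := fun u hu => by
    rcases hr u (Set.mem_insert_of_mem _ hu) with h | h <;> omega
  unfold ResolvesWrt
  rw [insert_sInf_eq G hG K hKne v hv x hsx r hr',
      insert_sInf_eq G hG K hKne v hv y hsy r hr']
end

section
/- Let G be a finite connected simple graph, let K be a nonempty clique of G, and let v be a vertex not in K such that K ∪ {v} is a clique. Let x be a vertex such that K separates v and x. Then for every function r : K ∪ {v} → {0,1}, min_{u ∈ K ∪ {v}} (d(x,u) + r(u)) = min_{u ∈ K} (d(x,u) + r(u)). -/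
theorem stmt7 {V : Type*} [Fintype V] (G : SimpleGraph V) (hG : G.Connected)
    (K : Set V) (hKne : K.Nonempty) (hK : G.IsClique K)
    (v : V) (hv : v ∉ K) (hKv : G.IsClique (insert v K))
    (x : V) (hsx : Separates G K v x)
    (r : V → ℕ) (hr : ∀ u ∈ insert v K, r u = 0 ∨ r u = 1) :
    sInf ((fun u => G.dist x u + r u) '' insert v K) =
      sInf ((fun u => G.dist x u + r u) '' K) := by
  classical
  obtain ⟨hvK, hxK, hsep⟩ := hsx
  obtain ⟨p, hp⟩ := hG.exists_walk_length_eq_dist v x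
  obtain ⟨w, hwsup, hwK⟩ := hsep p
  have hvw : v ≠ w := fun h => hvK (h ▸ hwK)
  have hsplit : G.dist v w + G.dist w x ≤ G.dist v x := by
    calc G.dist v w + G.dist w x
        ≤ (p.takeUntil w hwsup).length + (p.dropUntil w hwsup).length :=
          Nat.add_le_add (SimpleGraph.dist_le _) (SimpleGraph.dist_le _)
      _ = p.length := by
          rw [← SimpleGraph.Walk.length_append, SimpleGraph.Walk.take_spec]
      _ = G.dist v x := hp
  have hpos : 1 ≤ G.dist v w := hG.pos_dist_of_ne hvw
  have hrw : r w ≤ 1 := by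
    rcases hr w (Set.mem_insert_of_mem v hwK) with h | h <;> omega
  have key : G.dist x w + r w ≤ G.dist x v + r v := by
    have e1 : G.dist x w = G.dist w x := SimpleGraph.dist_comm
    have e2 : G.dist x v = G.dist v x := SimpleGraph.dist_comm
    omega
  have hKim : ((fun u => G.dist x u + r u) '' K).Nonempty := hKne.image _
  apply le_antisymm
  · exact Nat.sInf_le (Set.image_mono (Set.subset_insert v K) (Nat.sInf_mem hKim))
  · have h1 : ((fun u => G.dist x u + r u) '' insert v K).Nonempty :=
      ⟨_, Set.mem_image_of_mem _ (Set.mem_insert v K)⟩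
    obtain ⟨u, hu, hfu⟩ := Nat.sInf_mem h1
    rcases hu with rfl | huK
    · calc sInf ((fun u => G.dist x u + r u) '' K)
          ≤ G.dist x w + r w := Nat.sInf_le (Set.mem_image_of_mem _ hwK)
        _ ≤ G.dist x u + r u := key
        _ = _ := hfu
    · exact hfu ▸ Nat.sInf_le (Set.mem_image_of_mem _ huK)
end

section
/- Let G be a finite connected simple graph, let K be a nonempty clique of G, and let v be a vertex not in K such that K ∪ {v} is a clique. Let r : K ∪ {v} → {0,1} be a function with r(v) = 1 such that r(u) = 0 for at least one u ∈ K. Then for all vertices x and y of G, r resolves the pair (x,y) with respect to K ∪ {v} if and only if the restriction of r to K resolves the pair (x,y) with respect to K. -/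
theorem stmt8 {V : Type*} [Fintype V] (G : SimpleGraph V) (hG : G.Connected)
    (K : Set V) (hKne : K.Nonempty) (hK : G.IsClique K)
    (v : V) (hv : v ∉ K) (hKv : G.IsClique (insert v K))
    (r : V → ℕ) (hr : ∀ u ∈ insert v K, r u = 0 ∨ r u = 1)
    (hrv : r v = 1) (hr0 : ∃ u ∈ K, r u = 0) :
    ∀ x y : V, ResolvesWrt G (insert v K) r x y ↔ ResolvesWrt G K r x y := by
  obtain ⟨u, huK, hru⟩ := hr0
  have hadj : G.Adj v u := hKv (Set.mem_insert v K) (Set.mem_insert_of_mem v huK)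
    (fun h => hv (h ▸ huK))
  have key : ∀ x : V,
      sInf ((fun u => G.dist x u + r u) '' insert v K)
        = sInf ((fun u => G.dist x u + r u) '' K) := by
    intro x
    set f : V → ℕ := fun u => G.dist x u + r u with hf
    have hle : f u ≤ f v := by
      have htri : G.dist x u ≤ G.dist x v + G.dist v u := hG.dist_triangle
      have hd1 : G.dist v u = 1 := by
        rwa [SimpleGraph.dist_eq_one_iff_adj]
      simp only [hf, hru, hrv, add_zero]
      omega
    rw [Set.image_insert_eq]
    apply le_antisymm
    · exact Nat.sInf_le (Set.mem_insert_of_mem _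
        (Nat.sInf_mem (hKne.image f)))
    · refine le_csInf (Set.insert_nonempty _ _) ?_
      rintro b (rfl | hb)
      · exact le_trans (Nat.sInf_le ⟨u, huK, rfl⟩) hle
      · exact Nat.sInf_le hb
  intro x y
  unfold ResolvesWrt
  rw [key x, key y]
end

section
/- Let G be a finite connected simple graph, let K be a nonempty clique of G, and let v and x be vertices such that K separates v and x and v is adjacent to every vertex of K. Then d(x,v) = d(x,K) + 1. -/
theorem stmt13 {V : Type*} [Fintype V] (G : SimpleGraph V) (hG : G.Connected)
    (K : Set V) (hKne : K.Nonempty) (hK : G.IsClique K)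
    (v x : V) (hsep : Separates G K v x)
    (hadj : ∀ u ∈ K, G.Adj v u) :
    G.dist x v = distToSet G x K + 1 := by
  classical
  obtain ⟨hvK, hxK, hsep⟩ := hsep
  have hne : (G.dist x '' K).Nonempty := hKne.image _
  obtain ⟨k, hk, hdk⟩ := Nat.sInf_mem hne
  have hub : G.dist x v ≤ distToSet G x K + 1 := by
    calc G.dist x v ≤ G.dist x k + G.dist k v := hG.dist_triangle
    _ = distToSet G x K + 1 := by
      rw [hdk, SimpleGraph.dist_eq_one_iff_adj.mpr (hadj k hk).symm]; rfl
  refine le_antisymm hub ?_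
  obtain ⟨p, hp⟩ := hG.exists_walk_length_eq_dist x v
  obtain ⟨w, hwsup, hwK⟩ := hsep p.reverse
  have hwsup' : w ∈ p.support := by
    rwa [SimpleGraph.Walk.support_reverse, List.mem_reverse] at hwsup
  have hsplit := p.take_spec hwsup'
  have hlen : (p.takeUntil w hwsup').length + (p.dropUntil w hwsup').length = p.length := by
    rw [← SimpleGraph.Walk.length_append, hsplit]
  have h1 : distToSet G x K ≤ (p.takeUntil w hwsup').length :=
    le_trans (Nat.sInf_le ⟨w, hwK, rfl⟩) (SimpleGraph.dist_le _)
  have h2 : 1 ≤ (p.dropUntil w hwsup').length := by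
    by_contra h
    push_neg at h
    interval_cases hl : (p.dropUntil w hwsup').length
    exact hvK ((SimpleGraph.Walk.eq_of_length_eq_zero hl) ▸ hwK)
  omega
end

section
/- Let G be a finite connected simple graph and let K be a nonempty clique of G that separates two vertices x and s. Then d(x,K) + d(s,K) ≤ d(x,s) ≤ d(x,K) + d(s,K) + 1. -/
lemma distToSet_le {V : Type*} (G : SimpleGraph V) (x : V) (K : Set V)
    {w : V} (hw : w ∈ K) : distToSet G x K ≤ G.dist x w :=
  Nat.sInf_le ⟨w, hw, rfl⟩

lemma distToSet_exists {V : Type*} (G : SimpleGraph V) (x : V) (K : Set V)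
    (hKne : K.Nonempty) : ∃ a ∈ K, distToSet G x K = G.dist x a := by
  obtain ⟨a, ha, h⟩ := Nat.sInf_mem (hKne.image (G.dist x))
  exact ⟨a, ha, h.symm⟩

theorem stmt14 {V : Type*} [Fintype V] (G : SimpleGraph V) (hG : G.Connected)
    (K : Set V) (hKne : K.Nonempty) (hK : G.IsClique K)
    (x s : V) (hsep : Separates G K x s) :
    distToSet G x K + distToSet G s K ≤ G.dist x s ∧
      G.dist x s ≤ distToSet G x K + distToSet G s K + 1 := by
  classical
  obtain ⟨hx, hs, hwalk⟩ := hsep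
  constructor
  · obtain ⟨p, hp⟩ := hG.exists_walk_length_eq_dist x s
    obtain ⟨w, hwsup, hwK⟩ := hwalk p
    have h1 : G.dist x w ≤ (p.takeUntil w hwsup).length := SimpleGraph.dist_le _
    have h2 : G.dist w s ≤ (p.dropUntil w hwsup).length := SimpleGraph.dist_le _
    have hsplit : (p.takeUntil w hwsup).length + (p.dropUntil w hwsup).length = p.length := by
      have := congr_arg SimpleGraph.Walk.length (p.take_spec hwsup)
      rwa [SimpleGraph.Walk.length_append] at this
    calc distToSet G x K + distToSet G s K
        ≤ G.dist x w + G.dist s w :=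
          Nat.add_le_add (distToSet_le G x K hwK) (distToSet_le G s K hwK)
      _ = G.dist x w + G.dist w s := by rw [SimpleGraph.dist_comm (u := s) (v := w)]
      _ ≤ (p.takeUntil w hwsup).length + (p.dropUntil w hwsup).length :=
          Nat.add_le_add h1 h2
      _ = p.length := hsplit
      _ = G.dist x s := hp
  · obtain ⟨a, haK, ha⟩ := distToSet_exists G x K hKne
    obtain ⟨b, hbK, hb⟩ := distToSet_exists G s K hKne
    have hab : G.dist a b ≤ 1 := by
      by_cases h : a = b
      · subst h; simp [SimpleGraph.dist_self]
      · exact le_of_eq (SimpleGraph.dist_eq_one_iff_adj.mpr (hK haK hbK h))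
    calc G.dist x s ≤ G.dist x a + G.dist a s := hG.dist_triangle
      _ ≤ G.dist x a + (G.dist a b + G.dist b s) := by
          exact Nat.add_le_add_left hG.dist_triangle _
      _ ≤ G.dist x a + (1 + G.dist b s) := by
          exact Nat.add_le_add_left (Nat.add_le_add_right hab _) _
      _ = G.dist x a + G.dist s b + 1 := by rw [SimpleGraph.dist_comm (u := b) (v := s)]; ring
      _ = distToSet G x K + distToSet G s K + 1 := by rw [ha, hb]
end
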